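/- Let Θ_{R0}⁽¹⁾, Θ_{R0}⁽²⁾ be symmetric positive definite p×p real matrices with 1/L ≤ Λ_min(Θ_{R0}⁽ᵏ⁾) ≤ Λ_max(Θ_{R0}⁽ᵏ⁾) ≤ L for some L ≥ 1, set c = 1/(8L²), R₀⁽ᵏ⁾ = (Θ_{R0}⁽ᵏ⁾)⁻¹, and let s_k be the number of pairs (i,j) with i ≠ j and (Θ_{R0}⁽ᵏ⁾)_{ij} ≠ 0. Let R̂⁽¹⁾, R̂⁽²⁾ be symmetric p×p matrices such that R̂⁽ᵏ⁾ and R₀⁽ᵏ⁾ all have unit diagonal, and max_{k=1,2} ‖R̂⁽ᵏ⁾ − R₀⁽ᵏ⁾‖_∞ ≤ λ₀ for some λ₀ > 0. Suppose 2(ρ + λ₀) ≤ λ ≤ c/(8L) with ρ ≥ 0, and 8λ²(s₁+s₂)/c + 4pλ₀²/c ≤ λ₀/(2L). If (Θ̂_R⁽¹⁾, Θ̂_R⁽²⁾) minimizes F(Θ₁,Θ₂) = Σ_{k=1}² [tr(R̂⁽ᵏ⁾Θ_k) − log det Θ_k] + λ Σ_{k=1}² ‖Θ_k⁻‖₁ +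 ρ ‖Θ₁⁻ − Θ₂⁻‖₁ over pairs of symmetric positive definite matrices, then c Σ_{k=1}² ‖Θ̂_R⁽ᵏ⁾ − Θ_{R0}⁽ᵏ⁾‖_F² + λ Σ_{k=1}² ‖(Θ̂_R⁽ᵏ⁾ − Θ_{R0}⁽ᵏ⁾)⁻‖₁ ≤ 8λ²(s₁+s₂)/c. -/

import Mathlib

open Matrix
open scoped BigOperators Classical

noncomputable section

/-- Frobenius norm squared: `‖A‖_F² = Σ_{i,j} A_{ij}²`. -/
def frobSq {p : ℕ} (A : Matrix (Fin p) (Fin p) ℝ) : ℝ := ∑ i, ∑ j, (A i j) ^ 2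

/-- Frobenius norm `‖A‖_F = (Σ_{i,j} A_{ij}²)^{1/2}`. -/
def frobNorm {p : ℕ} (A : Matrix (Fin p) (Fin p) ℝ) : ℝ := Real.sqrt (frobSq A)

/-- Entrywise ℓ₁ norm `‖A‖₁ = Σ_{i,j} |A_{ij}|`. -/
def l1Norm {p : ℕ} (A : Matrix (Fin p) (Fin p) ℝ) : ℝ := ∑ i, ∑ j, |A i j|

/-- Entrywise supremum norm `‖A‖_∞ = max_{i,j} |A_{ij}|`. -/
def supNorm {p : ℕ} (A : Matrix (Fin p) (Fin p) ℝ) : ℝ := ⨆ i, ⨆ j, |A i j|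

/-- ℓ₁-operator norm `|||A|||₁ = max_j Σ_i |A_{ij}|`. -/
def opNorm1 {p : ℕ} (A : Matrix (Fin p) (Fin p) ℝ) : ℝ := ⨆ j, ∑ i, |A i j|

/-- `A⁺`: the diagonal matrix with the same diagonal as `A`. -/
def diagPart {p : ℕ} (A : Matrix (Fin p) (Fin p) ℝ) : Matrix (Fin p) (Fin p) ℝ :=
  Matrix.diagonal (fun i => A i i)

/-- `A⁻ = A − A⁺`: the off-diagonal part of `A`. -/
def offDiagPart {p : ℕ} (A : Matrix (Fin p) (Fin p) ℝ) : Matrix (Fin p) (Fin p) ℝ :=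
  A - diagPart A

/-- Number of off-diagonal nonzero entries of `A`:
`s = #{(i,j) : i ≠ j, A_{ij} ≠ 0}`. -/
def sparsity {p : ℕ} (A : Matrix (Fin p) (Fin p) ℝ) : ℕ :=
  (Finset.univ.filter (fun ij : Fin p × Fin p => ij.1 ≠ ij.2 ∧ A ij.1 ij.2 ≠ 0)).card

/-- Fused graphical lasso objective for `K` groups:
`F(Θ₁,…,Θ_K) = Σ_k [tr(Σ̂⁽ᵏ⁾Θ_k) − log det Θ_k] + λ Σ_k ‖Θ_k⁻‖₁
  + ρ Σ_{k<k'} ‖Θ_k⁻ − Θ_{k'}⁻‖₁`. -/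
def objFGL {p K : ℕ} (S : Fin K → Matrix (Fin p) (Fin p) ℝ) (lam rho : ℝ)
    (Θ : Fin K → Matrix (Fin p) (Fin p) ℝ) : ℝ :=
  ∑ k, (Matrix.trace (S k * Θ k) - Real.log (Θ k).det)
    + lam * ∑ k, l1Norm (offDiagPart (Θ k))
    + rho * ∑ k, ∑ k', if k < k' then l1Norm (offDiagPart (Θ k) - offDiagPart (Θ k')) else 0

/-!
Along the segment from `Θ₀` to the minimizer `Θ̂` the objective `F` is convex (`log det` is
concave: its tangent-plane bound `log det B ≤ log det A + tr (A⁻¹ (B - A))`, taken at a convex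
combination, averages out), so `F ≤ F(Θ₀)` on the whole segment. Writing `A = P Pᵀ`,
`B = P diag(μ) Pᵀ`, the `log det` increment is `∑ log μᵢ`; within Frobenius distance `1 / L` of a
matrix with spectrum in `[1 / L, L]` all `μᵢ ≤ 2`, which yields the strong concavity term
`-‖B - A‖²_F / (8 L²)`. Since `R̂ - R₀` has zero diagonal, the trace error only sees off-diagonal
entries; with decomposability of the `ℓ₁` penalty over the support of `Θ₀` and AM-GM this gives
`F(Θ) - F(Θ₀) ≥ (c/2) ∑ ‖Δₖ‖²_F + (λ/2) ∑ ‖Δₖ⁻‖₁ - 2 λ² (s₁ + s₂) / c` near `Θ₀`. The tuning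
conditions make the right side positive at distance `1 / L`, so `Θ̂` lies closer than that, where
the same bound together with `F(Θ̂) ≤ F(Θ₀)` is the oracle inequality.
-/

section

variable {p : ℕ}

lemma frobSq_nonneg (A : Matrix (Fin p) (Fin p) ℝ) : 0 ≤ frobSq A := by
  unfold frobSq; positivity

lemma frobSq_smul (t : ℝ) (A : Matrix (Fin p) (Fin p) ℝ) : frobSq (t • A) = t ^ 2 * frobSq A := by
  simp only [frobSq, Finset.mul_sum, Matrix.smul_apply, smul_eq_mul, mul_pow]

lemma frobSq_diagonal (d : Fin p → ℝ) : frobSq (diagonal d) = ∑ i, d i ^ 2 := by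
  refine Finset.sum_congr rfl fun i _ => ?_
  rw [Finset.sum_eq_single i (fun j _ hj => by simp [diagonal_apply_ne' d hj]) (by simp)]
  simp

lemma frobSq_eq_trace (A : Matrix (Fin p) (Fin p) ℝ) : frobSq A = trace (Aᵀ * A) := by
  simp only [frobSq, trace, diag_apply, mul_apply, transpose_apply, sq]
  exact Finset.sum_comm

lemma frobSq_conj_of_transpose_mul_self {U : Matrix (Fin p) (Fin p) ℝ} (hU : Uᵀ * U = 1)
    (X : Matrix (Fin p) (Fin p) ℝ) : frobSq (U * X * Uᵀ) = frobSq X := by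
  have hconj : (U * X * Uᵀ)ᵀ * (U * X * Uᵀ) = U * (Xᵀ * (Uᵀ * U) * X) * Uᵀ := by
    simp only [transpose_mul, transpose_transpose, Matrix.mul_assoc]
  rw [frobSq_eq_trace, frobSq_eq_trace, hconj, hU, Matrix.mul_one, trace_mul_comm,
    ← Matrix.mul_assoc, hU, Matrix.one_mul]

lemma frobSq_diagonal_conj_le {m M : ℝ} {g : Fin p → ℝ} (hm : 0 ≤ m)
    (hg : ∀ i, m ≤ g i ^ 2 ∧ g i ^ 2 ≤ M) (Y : Matrix (Fin p) (Fin p) ℝ) :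
    m ^ 2 * frobSq Y ≤ frobSq (diagonal g * Y * diagonal g) ∧
      frobSq (diagonal g * Y * diagonal g) ≤ M ^ 2 * frobSq Y := by
  have hentry : ∀ i j, (diagonal g * Y * diagonal g) i j ^ 2 = g i ^ 2 * g j ^ 2 * Y i j ^ 2 :=
    fun i j => by rw [mul_diagonal, diagonal_mul]; ring
  simp only [frobSq, hentry, Finset.mul_sum]
  constructor <;> refine Finset.sum_le_sum fun i _ => Finset.sum_le_sum fun j _ => ?_ <;>
    gcongr
  · nlinarith [hg i, hg j]
  · nlinarith [hg i, hg j]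

lemma Matrix.IsHermitian.exists_orthogonal_diagonalization {A : Matrix (Fin p) (Fin p) ℝ}
    (hA : A.IsHermitian) :
    ∃ U : Matrix (Fin p) (Fin p) ℝ, Uᵀ * U = 1 ∧ U * Uᵀ = 1 ∧
      A = U * diagonal hA.eigenvalues * Uᵀ := by
  have hU := hA.eigenvectorUnitary.2
  refine ⟨hA.eigenvectorUnitary, ?_, ?_, ?_⟩
  · simpa [star_eq_conjTranspose] using mem_unitaryGroup_iff'.mp hU
  · simpa [star_eq_conjTranspose] using mem_unitaryGroup_iff.mp hU
  · conv_lhs => rw [hA.spectral_theorem]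
    simp [Unitary.conjStarAlgAut_apply, star_eq_conjTranspose]

lemma frobSq_conj_le_of_eq_mul_transpose {A P : Matrix (Fin p) (Fin p) ℝ} (hA : A.IsHermitian)
    (hAP : A = P * Pᵀ) {m M : ℝ} (hm : 0 < m)
    (hev : ∀ i, m ≤ hA.eigenvalues i ∧ hA.eigenvalues i ≤ M)
    (X : Matrix (Fin p) (Fin p) ℝ) :
    m ^ 2 * frobSq X ≤ frobSq (P * X * Pᵀ) ∧ frobSq (P * X * Pᵀ) ≤ M ^ 2 * frobSq X := by
  obtain ⟨U, hUtU, hUUt, hspec⟩ := hA.exists_orthogonal_diagonalization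
  set a := hA.eigenvalues
  set g : Fin p → ℝ := fun i => Real.sqrt (a i)
  have hg2 : ∀ i, g i ^ 2 = a i := fun i => Real.sq_sqrt (hm.le.trans (hev i).1)
  have hg0 : ∀ i, g i ≠ 0 := fun i => (Real.sqrt_pos.mpr (hm.trans_le (hev i).1)).ne'
  -- `P = U √a W` with `W` orthogonal: a singular value decomposition of `P`
  set W := diagonal g⁻¹ * Uᵀ * P
  have hWWt : W * Wᵀ = 1 := by
    have : W * Wᵀ = diagonal g⁻¹ * (Uᵀ * U) * diagonal a * (Uᵀ * U) * diagonal g⁻¹ := by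
      simp only [W, transpose_mul, diagonal_transpose, transpose_transpose, Matrix.mul_assoc]
      rw [← Matrix.mul_assoc P, ← hAP, hspec]
      simp only [Matrix.mul_assoc]
    rw [this, hUtU, Matrix.mul_one, Matrix.mul_one, diagonal_mul_diagonal, diagonal_mul_diagonal,
      ← diagonal_one]
    congr 1; funext i
    simp only [Pi.inv_apply, ← hg2]
    field_simp [hg0 i]
  have hPW : P = U * diagonal g * W := by
    have hgg : diagonal g * diagonal g⁻¹ = 1 := by
      rw [diagonal_mul_diagonal, ← diagonal_one]
      congr 1; funext i
      exact mul_inv_cancel₀ (hg0 i)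
    calc P = U * (diagonal g * diagonal g⁻¹) * Uᵀ * P := by
          rw [hgg, Matrix.mul_one, hUUt, Matrix.one_mul]
      _ = U * diagonal g * W := by simp only [W, Matrix.mul_assoc]
  have hconj : P * X * Pᵀ = U * (diagonal g * (W * X * Wᵀ) * diagonal g) * Uᵀ := by
    rw [hPW]; simp only [transpose_mul, diagonal_transpose, Matrix.mul_assoc]
  rw [hconj, frobSq_conj_of_transpose_mul_self hUtU, ← frobSq_conj_of_transpose_mul_self
    (mul_eq_one_comm.mp hWWt) X]
  exact frobSq_diagonal_conj_le hm.le (fun i => hg2 i ▸ hev i) _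

lemma Matrix.PosDef.exists_eq_mul_transpose {A : Matrix (Fin p) (Fin p) ℝ} (hA : A.PosDef) :
    ∃ N : Matrix (Fin p) (Fin p) ℝ, IsUnit N ∧ A = N * Nᵀ := by
  obtain ⟨U, -, -, hspec⟩ := hA.1.exists_orthogonal_diagonalization
  set g : Fin p → ℝ := fun i => Real.sqrt (hA.1.eigenvalues i)
  have hAN : A = U * diagonal g * (U * diagonal g)ᵀ := by
    rw [transpose_mul, diagonal_transpose, Matrix.mul_assoc, ← Matrix.mul_assoc (diagonal g),
      diagonal_mul_diagonal, ← Matrix.mul_assoc, hspec]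
    congr 3; funext i
    exact (Real.mul_self_sqrt (hA.eigenvalues_pos i).le).symm
  refine ⟨_, (isUnit_iff_isUnit_det _).mpr (isUnit_iff_ne_zero.mpr fun h => ?_), hAN⟩
  exact hA.det_pos.ne' (by rw [hAN, det_mul, h, zero_mul])

lemma Matrix.PosDef.exists_simultaneous_diagonalization {A B : Matrix (Fin p) (Fin p) ℝ}
    (hA : A.PosDef) (hB : B.PosDef) : ∃ (P : Matrix (Fin p) (Fin p) ℝ) (μ : Fin p → ℝ),
      IsUnit P ∧ (∀ i, 0 < μ i) ∧ A = P * Pᵀ ∧ B = P * diagonal μ * Pᵀ := by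
  obtain ⟨N, hN, hAN⟩ := hA.exists_eq_mul_transpose
  have hNN : N * N⁻¹ = 1 := mul_nonsing_inv N ((isUnit_iff_isUnit_det N).mp hN)
  have hC : (N⁻¹ * B * N⁻¹ᵀ).PosDef := by
    simpa [star_eq_conjTranspose] using
      (IsUnit.posDef_star_right_conjugate_iff (isUnit_nonsing_inv_iff.mpr hN)).mpr hB
  obtain ⟨V, -, hVVt, hspec⟩ := hC.1.exists_orthogonal_diagonalization
  have hμ := hC.eigenvalues_pos
  generalize hC.1.eigenvalues = μ at hμ hspec
  refine ⟨N * V, μ, hN.mul (IsUnit.of_mul_eq_one _ hVVt), hμ, ?_, ?_⟩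
  · rw [transpose_mul, Matrix.mul_assoc, ← Matrix.mul_assoc V, hVVt, Matrix.one_mul, hAN]
  · calc B = (N * N⁻¹) * B * (N * N⁻¹)ᵀ := by
          rw [hNN, transpose_one, Matrix.one_mul, Matrix.mul_one]
      _ = N * (N⁻¹ * B * N⁻¹ᵀ) * Nᵀ := by simp only [transpose_mul, Matrix.mul_assoc]
      _ = N * V * diagonal μ * (N * V)ᵀ := by
        rw [hspec]; simp only [transpose_mul, Matrix.mul_assoc]

lemma mul_diagonal_mul_transpose_sub (P : Matrix (Fin p) (Fin p) ℝ) (μ : Fin p → ℝ) :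
    P * diagonal μ * Pᵀ - P * Pᵀ = P * diagonal (fun i => μ i - 1) * Pᵀ := by
  rw [show diagonal (fun i => μ i - 1) = diagonal μ - 1 by rw [← diagonal_one, diagonal_sub],
    Matrix.mul_sub, Matrix.sub_mul, Matrix.mul_one]

lemma log_det_mul_diagonal_mul_transpose {P : Matrix (Fin p) (Fin p) ℝ} (hP : IsUnit P)
    {μ : Fin p → ℝ} (hμ : ∀ i, 0 < μ i) :
    Real.log (P * diagonal μ * Pᵀ).det = Real.log (P * Pᵀ).det + ∑ i, Real.log (μ i) := by
  have hdet : P.det * P.det ≠ 0 := mul_self_ne_zero.mpr ((isUnit_iff_isUnit_det P).mp hP).ne_zero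
  simp only [det_mul, det_transpose, det_diagonal]
  rw [mul_right_comm, Real.log_mul hdet (Finset.prod_pos fun i _ => hμ i).ne',
    Real.log_prod fun i _ => (hμ i).ne']

lemma trace_inv_mul_mul_diagonal_mul_transpose_sub {P : Matrix (Fin p) (Fin p) ℝ} (hP : IsUnit P)
    (μ : Fin p → ℝ) :
    trace ((P * Pᵀ)⁻¹ * (P * diagonal μ * Pᵀ - P * Pᵀ)) = ∑ i, (μ i - 1) := by
  have hdet := (isUnit_iff_isUnit_det P).mp hP
  rw [mul_diagonal_mul_transpose_sub, Matrix.mul_inv_rev,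
    show Pᵀ⁻¹ * P⁻¹ * (P * diagonal (fun i => μ i - 1) * Pᵀ)
      = Pᵀ⁻¹ * (P⁻¹ * P) * (diagonal (fun i => μ i - 1) * Pᵀ) by
        simp only [Matrix.mul_assoc],
    nonsing_inv_mul P hdet, Matrix.mul_one, trace_mul_comm, Matrix.mul_assoc,
    mul_nonsing_inv _ (by rwa [det_transpose]), Matrix.mul_one, trace_diagonal]

lemma log_le_sub_one_sub_sq_div_eight {y : ℝ} (hy : 0 < y) (hy2 : y ≤ 2) :
    Real.log y ≤ (y - 1) - (y - 1) ^ 2 / 8 := by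
  -- `log y = 2 log √y ≤ 2 (√y - 1)`, which is `≤ (y - 1) - (y - 1)² / 8` when `y ≤ 2`
  have hu : 0 < Real.sqrt y := Real.sqrt_pos.mpr hy
  have hlog : Real.log y = 2 * Real.log (Real.sqrt y) := by rw [Real.log_sqrt hy.le]; ring
  have hu2 : Real.sqrt y ^ 2 = y := Real.sq_sqrt hy.le
  nlinarith [Real.log_le_sub_one_of_pos hu, sq_nonneg (Real.sqrt y - 1),
    sq_nonneg (2 * Real.sqrt y - 3)]

namespace Matrix.PosDef

variable {A B : Matrix (Fin p) (Fin p) ℝ}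

lemma convexComb (hA : A.PosDef) (hB : B.PosDef) {t : ℝ} (ht0 : 0 ≤ t) (ht1 : t ≤ 1) :
    ((1 - t) • A + t • B).PosDef := by
  rcases ht1.lt_or_eq with ht1 | rfl
  · exact (hA.smul (sub_pos.mpr ht1)).add_posSemidef (hB.posSemidef.smul ht0)
  · simpa using hB

theorem log_det_le_add_trace (hA : A.PosDef) (hB : B.PosDef) :
    Real.log B.det ≤ Real.log A.det + trace (A⁻¹ * (B - A)) := by
  obtain ⟨P, μ, hP, hμ, rfl, rfl⟩ := hA.exists_simultaneous_diagonalization hB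
  rw [log_det_mul_diagonal_mul_transpose hP hμ, trace_inv_mul_mul_diagonal_mul_transpose_sub hP]
  gcongr with i
  exact Real.log_le_sub_one_of_pos (hμ i)

theorem log_det_le_add_trace_sub_frobSq (hA : A.PosDef) (hB : B.PosDef) {m M : ℝ} (hm : 0 < m)
    (hev : ∀ i, m ≤ hA.1.eigenvalues i ∧ hA.1.eigenvalues i ≤ M)
    (hF : frobSq (B - A) ≤ m ^ 2) :
    Real.log B.det ≤
      Real.log A.det + trace (A⁻¹ * (B - A)) - frobSq (B - A) / (8 * M ^ 2) := by
  obtain ⟨P, μ, hP, hμ, rfl, rfl⟩ := hA.exists_simultaneous_diagonalization hB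
  obtain ⟨hlow, hup⟩ := frobSq_conj_le_of_eq_mul_transpose hA.1 rfl hm hev
    (diagonal fun i => μ i - 1)
  rw [← mul_diagonal_mul_transpose_sub, frobSq_diagonal] at hlow hup
  have hsq : ∑ i, (μ i - 1) ^ 2 ≤ 1 := le_of_mul_le_mul_left (by linarith) (pow_pos hm 2)
  have hμ2 : ∀ i, μ i ≤ 2 := fun i => by
    nlinarith [Finset.single_le_sum (fun j _ => sq_nonneg (μ j - 1)) (Finset.mem_univ i)]
  have hdiv :
      frobSq (P * diagonal μ * Pᵀ - P * Pᵀ) / (8 * M ^ 2) ≤ ∑ i, (μ i - 1) ^ 2 / 8 := by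
    rw [← Finset.sum_div, show (8 * M ^ 2) = M ^ 2 * 8 by ring, ← div_div]
    gcongr
    exact div_le_of_le_mul₀ (sq_nonneg M) (by positivity) (by linarith)
  rw [log_det_mul_diagonal_mul_transpose hP hμ, trace_inv_mul_mul_diagonal_mul_transpose_sub hP]
  have := Finset.sum_le_sum fun i (_ : i ∈ Finset.univ) =>
    log_le_sub_one_sub_sq_div_eight (hμ i) (hμ2 i)
  rw [Finset.sum_sub_distrib] at this
  linarith

theorem log_det_convexComb_ge (hA : A.PosDef) (hB : B.PosDef) {t : ℝ} (ht0 : 0 ≤ t)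
    (ht1 : t ≤ 1) :
    (1 - t) * Real.log A.det + t * Real.log B.det ≤ Real.log ((1 - t) • A + t • B).det := by
  set C := (1 - t) • A + t • B
  have hC := hA.convexComb hB ht0 ht1
  have htangent : (1 - t) * trace (C⁻¹ * (A - C)) + t * trace (C⁻¹ * (B - C)) = 0 := by
    have h := congrArg trace (congrArg (C⁻¹ * ·)
      (show (1 - t) • (A - C) + t • (B - C) = 0 by module))
    simpa only [Matrix.mul_add, Matrix.mul_smul, Matrix.mul_zero, trace_add, trace_smul,
      trace_zero, smul_eq_mul] using h
  linarith [mul_le_mul_of_nonneg_left (hC.log_det_le_add_trace hA) (sub_nonneg.mpr ht1),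
    mul_le_mul_of_nonneg_left (hC.log_det_le_add_trace hB) ht0]

end Matrix.PosDef

lemma offDiagPart_apply (A : Matrix (Fin p) (Fin p) ℝ) (i j : Fin p) :
    offDiagPart A i j = if i = j then 0 else A i j := by
  by_cases h : i = j
  · subst h; simp [offDiagPart, diagPart]
  · simp [offDiagPart, diagPart, h]

lemma offDiagPart_linearCombination (a b : ℝ) (A B : Matrix (Fin p) (Fin p) ℝ) :
    offDiagPart (a • A + b • B) = a • offDiagPart A + b • offDiagPart B := by
  ext i j; simp only [offDiagPart_apply, Matrix.add_apply, Matrix.smul_apply, smul_eq_mul]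
  split_ifs <;> ring

lemma offDiagPart_sub (A B : Matrix (Fin p) (Fin p) ℝ) :
    offDiagPart (A - B) = offDiagPart A - offDiagPart B := by
  simpa [sub_eq_add_neg] using offDiagPart_linearCombination 1 (-1) A B

lemma l1Norm_eq_sum_prod (A : Matrix (Fin p) (Fin p) ℝ) :
    l1Norm A = ∑ ij : Fin p × Fin p, |A ij.1 ij.2| :=
  (Fintype.sum_prod_type' _).symm

lemma l1Norm_nonneg (A : Matrix (Fin p) (Fin p) ℝ) : 0 ≤ l1Norm A := by
  unfold l1Norm; positivity

lemma l1Norm_add_le (A B : Matrix (Fin p) (Fin p) ℝ) :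
    l1Norm (A + B) ≤ l1Norm A + l1Norm B := by
  simp only [l1Norm, ← Finset.sum_add_distrib]
  gcongr with i _ j _
  exact abs_add_le _ _

lemma l1Norm_smul (t : ℝ) (A : Matrix (Fin p) (Fin p) ℝ) :
    l1Norm (t • A) = |t| * l1Norm A := by
  simp only [l1Norm, Finset.mul_sum, Matrix.smul_apply, smul_eq_mul, abs_mul]

lemma l1Norm_sub_le (A B : Matrix (Fin p) (Fin p) ℝ) :
    l1Norm (A - B) ≤ l1Norm A + l1Norm B := by
  have h := l1Norm_add_le A ((-1 : ℝ) • B)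
  rwa [l1Norm_smul, neg_one_smul, abs_neg, abs_one, one_mul, ← sub_eq_add_neg] at h

lemma l1Norm_convexComb_le {t : ℝ} (ht0 : 0 ≤ t) (ht1 : t ≤ 1)
    (A B : Matrix (Fin p) (Fin p) ℝ) :
    l1Norm ((1 - t) • A + t • B) ≤ (1 - t) * l1Norm A + t * l1Norm B := by
  simpa only [l1Norm_smul, abs_of_nonneg ht0, abs_of_nonneg (sub_nonneg.mpr ht1)] using
    l1Norm_add_le ((1 - t) • A) (t • B)

lemma supNorm_nonneg (A : Matrix (Fin p) (Fin p) ℝ) : 0 ≤ supNorm A :=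
  Real.iSup_nonneg fun _ => Real.iSup_nonneg fun _ => abs_nonneg _

lemma abs_le_supNorm (A : Matrix (Fin p) (Fin p) ℝ) (i j : Fin p) : |A i j| ≤ supNorm A :=
  (le_ciSup (Set.finite_range _).bddAbove j).trans
    (le_ciSup (f := fun i => ⨆ j, |A i j|) (Set.finite_range _).bddAbove i)

lemma abs_trace_mul_le_supNorm_mul_l1Norm {E : Matrix (Fin p) (Fin p) ℝ} (hE : ∀ i, E i i = 0)
    (Δ : Matrix (Fin p) (Fin p) ℝ) :
    |trace (E * Δ)| ≤ supNorm E * l1Norm (offDiagPart Δ) := by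
  have hentry : ∀ i j, |E i j * Δ j i| ≤ supNorm E * |offDiagPart Δ j i| := fun i j => by
    rw [offDiagPart_apply]
    split_ifs with h
    · simp [h, hE]
    · rw [abs_mul]; gcongr; exact abs_le_supNorm E i j
  calc |trace (E * Δ)| = |∑ i, ∑ j, E i j * Δ j i| := by
        simp only [trace, diag_apply, mul_apply]
    _ ≤ ∑ i, ∑ j, |E i j * Δ j i| :=
      (Finset.abs_sum_le_sum_abs _ _).trans
        (Finset.sum_le_sum fun i _ => Finset.abs_sum_le_sum_abs _ _)
    _ ≤ ∑ i, ∑ j, supNorm E * |offDiagPart Δ j i| := by gcongr with i _ j _; exact hentry i j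
    _ = supNorm E * l1Norm (offDiagPart Δ) := by
      rw [l1Norm, Finset.sum_comm, Finset.mul_sum]; simp only [Finset.mul_sum]

def offDiagSupport (A : Matrix (Fin p) (Fin p) ℝ) : Finset (Fin p × Fin p) :=
  Finset.univ.filter fun ij => ij.1 ≠ ij.2 ∧ A ij.1 ij.2 ≠ 0

lemma card_offDiagSupport (A : Matrix (Fin p) (Fin p) ℝ) :
    (offDiagSupport A).card = sparsity A := rfl

lemma l1Norm_offDiagPart_add_ge (Θ₀ Δ : Matrix (Fin p) (Fin p) ℝ) :
    l1Norm (offDiagPart Δ) + l1Norm (offDiagPart Θ₀) ≤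
      l1Norm (offDiagPart (Θ₀ + Δ)) + 2 * ∑ ij ∈ offDiagSupport Θ₀, |Δ ij.1 ij.2| := by
  simp only [l1Norm_eq_sum_prod, offDiagSupport, Finset.sum_filter, Finset.mul_sum,
    ← Finset.sum_add_distrib]
  refine Finset.sum_le_sum fun ij _ => ?_
  simp only [offDiagPart_apply, Matrix.add_apply]
  by_cases hij : ij.1 = ij.2
  · simp [hij]
  by_cases h0 : Θ₀ ij.1 ij.2 = 0
  · simp [hij, h0]
  · simp only [hij, h0, if_false, ne_eq, not_false_eq_true, and_self, if_true]
    have h := abs_add_le (Θ₀ ij.1 ij.2 + Δ ij.1 ij.2) (-Δ ij.1 ij.2)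
    rw [add_neg_cancel_right, abs_neg] at h
    linarith

lemma two_mul_sum_abs_le {c : ℝ} (hc : 0 < c) (lam : ℝ) (S : Finset (Fin p × Fin p))
    (Δ : Matrix (Fin p) (Fin p) ℝ) :
    2 * lam * ∑ ij ∈ S, |Δ ij.1 ij.2| ≤ c / 2 * frobSq Δ + 2 * lam ^ 2 / c * S.card := by
  have hamgm : ∀ x : ℝ, 2 * lam * |x| ≤ c / 2 * x ^ 2 + 2 * lam ^ 2 / c := fun x => by
    have hsq : c / 2 * |x| ^ 2 + 2 * lam ^ 2 / c - 2 * lam * |x|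
        = (c * |x| - 2 * lam) ^ 2 / (2 * c) := by
      field_simp; ring
    rw [← sq_abs x]
    linarith [div_nonneg (sq_nonneg (c * |x| - 2 * lam)) (by positivity : (0 : ℝ) ≤ 2 * c)]
  have hfrob : ∑ ij ∈ S, Δ ij.1 ij.2 ^ 2 ≤ frobSq Δ := by
    rw [frobSq, ← Fintype.sum_prod_type']
    exact Finset.sum_le_univ_sum_of_nonneg fun _ => sq_nonneg _
  calc 2 * lam * ∑ ij ∈ S, |Δ ij.1 ij.2|
      ≤ ∑ ij ∈ S, (c / 2 * Δ ij.1 ij.2 ^ 2 + 2 * lam ^ 2 / c) := by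
        rw [Finset.mul_sum]; exact Finset.sum_le_sum fun ij _ => hamgm _
    _ ≤ c / 2 * frobSq Δ + 2 * lam ^ 2 / c * S.card := by
        rw [Finset.sum_add_distrib, ← Finset.mul_sum, Finset.sum_const, nsmul_eq_mul,
          mul_comm _ (2 * lam ^ 2 / c)]
        gcongr

lemma trace_sub_log_det_increment_ge {S Θ₀ Θ : Matrix (Fin p) (Fin p) ℝ}
    (hΘ₀ : Θ₀.PosDef) (hΘ : Θ.PosDef) {m M : ℝ} (hm : 0 < m)
    (hev : ∀ i, m ≤ hΘ₀.1.eigenvalues i ∧ hΘ₀.1.eigenvalues i ≤ M)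
    (hF : frobSq (Θ - Θ₀) ≤ m ^ 2) (hdiag : ∀ i, S i i = Θ₀⁻¹ i i) :
    frobSq (Θ - Θ₀) / (8 * M ^ 2)
        - supNorm (S - Θ₀⁻¹) * l1Norm (offDiagPart (Θ - Θ₀)) ≤
      (trace (S * Θ) - Real.log Θ.det) - (trace (S * Θ₀) - Real.log Θ₀.det) := by
  have hsplit : trace (S * Θ) - trace (S * Θ₀) =
      trace (Θ₀⁻¹ * (Θ - Θ₀)) + trace ((S - Θ₀⁻¹) * (Θ - Θ₀)) := by
    rw [← trace_add, ← Matrix.add_mul, add_sub_cancel, ← trace_sub, Matrix.mul_sub]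
  have hlog := hΘ₀.log_det_le_add_trace_sub_frobSq hΘ hm hev hF
  have htr := abs_trace_mul_le_supNorm_mul_l1Norm (E := S - Θ₀⁻¹)
    (fun i => by rw [Matrix.sub_apply, hdiag, sub_self]) (Θ - Θ₀)
  linarith [neg_abs_le (trace ((S - Θ₀⁻¹) * (Θ - Θ₀)))]

lemma l1Norm_offDiagPart_increment_ge {c lam : ℝ} (hc : 0 < c) (hlam : 0 ≤ lam)
    (Θ₀ Θ : Matrix (Fin p) (Fin p) ℝ) :
    lam * l1Norm (offDiagPart (Θ - Θ₀)) - c / 2 * frobSq (Θ - Θ₀)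
        - 2 * lam ^ 2 / c * sparsity Θ₀ ≤
      lam * l1Norm (offDiagPart Θ) - lam * l1Norm (offDiagPart Θ₀) := by
  have hdecomp := l1Norm_offDiagPart_add_ge Θ₀ (Θ - Θ₀)
  rw [add_sub_cancel] at hdecomp
  have hamgm := two_mul_sum_abs_le hc lam (offDiagSupport Θ₀) (Θ - Θ₀)
  rw [card_offDiagSupport] at hamgm
  linarith [mul_le_mul_of_nonneg_left hdecomp hlam]

lemma l1Norm_sub_le_sub_add_add (A B A₀ B₀ : Matrix (Fin p) (Fin p) ℝ) :
    l1Norm (A₀ - B₀) ≤ l1Norm (A - B) + l1Norm (A - A₀) + l1Norm (B - B₀) := by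
  have h := (l1Norm_add_le (A - B - (A - A₀)) (B - B₀)).trans
    (add_le_add_left (l1Norm_sub_le (A - B) (A - A₀)) _)
  rwa [show A - B - (A - A₀) + (B - B₀) = A₀ - B₀ by abel] at h

lemma objFGL_fin_two (S : Fin 2 → Matrix (Fin p) (Fin p) ℝ) (lam rho : ℝ)
    (Θ : Fin 2 → Matrix (Fin p) (Fin p) ℝ) :
    objFGL S lam rho Θ =
      (trace (S 0 * Θ 0) - Real.log (Θ 0).det) + (trace (S 1 * Θ 1) - Real.log (Θ 1).det)
        + lam * (l1Norm (offDiagPart (Θ 0)) + l1Norm (offDiagPart (Θ 1)))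
        + rho * l1Norm (offDiagPart (Θ 0) - offDiagPart (Θ 1)) := by
  simp [objFGL, Fin.sum_univ_two]; ring

lemma objFGL_convexComb_le {K : ℕ} (S : Fin K → Matrix (Fin p) (Fin p) ℝ) {lam rho : ℝ}
    (hlam : 0 ≤ lam) (hrho : 0 ≤ rho) {Θ₀ Θ₁ : Fin K → Matrix (Fin p) (Fin p) ℝ}
    (hΘ₀ : ∀ k, (Θ₀ k).PosDef) (hΘ₁ : ∀ k, (Θ₁ k).PosDef) {t : ℝ} (ht0 : 0 ≤ t)
    (ht1 : t ≤ 1) :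
    objFGL S lam rho (fun k => (1 - t) • Θ₀ k + t • Θ₁ k) ≤
      (1 - t) * objFGL S lam rho Θ₀ + t * objFGL S lam rho Θ₁ := by
  have hsum : ∀ f g h : Fin K → ℝ, (∀ k, f k ≤ (1 - t) * g k + t * h k) →
      ∑ k, f k ≤ (1 - t) * ∑ k, g k + t * ∑ k, h k := fun f g h hfgh => by
    rw [Finset.mul_sum, Finset.mul_sum, ← Finset.sum_add_distrib]
    exact Finset.sum_le_sum fun k _ => hfgh k
  have hloss : ∀ k, trace (S k * ((1 - t) • Θ₀ k + t • Θ₁ k))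
      - Real.log ((1 - t) • Θ₀ k + t • Θ₁ k).det ≤
      (1 - t) * (trace (S k * Θ₀ k) - Real.log (Θ₀ k).det)
        + t * (trace (S k * Θ₁ k) - Real.log (Θ₁ k).det) := fun k => by
    have := (hΘ₀ k).log_det_convexComb_ge (hΘ₁ k) ht0 ht1
    simp only [Matrix.mul_add, Matrix.mul_smul, trace_add, trace_smul, smul_eq_mul]
    linarith
  have hpen : ∀ k, l1Norm (offDiagPart ((1 - t) • Θ₀ k + t • Θ₁ k)) ≤
      (1 - t) * l1Norm (offDiagPart (Θ₀ k)) + t * l1Norm (offDiagPart (Θ₁ k)) := fun k => by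
    rw [offDiagPart_linearCombination]
    exact l1Norm_convexComb_le ht0 ht1 _ _
  have hfused : ∀ k k', (if k < k' then l1Norm (offDiagPart ((1 - t) • Θ₀ k + t • Θ₁ k)
      - offDiagPart ((1 - t) • Θ₀ k' + t • Θ₁ k')) else 0) ≤
      (1 - t) * (if k < k' then l1Norm (offDiagPart (Θ₀ k) - offDiagPart (Θ₀ k')) else 0)
        + t * (if k < k' then l1Norm (offDiagPart (Θ₁ k) - offDiagPart (Θ₁ k')) else 0) :=
    fun k k' => by
      split_ifs
      · rw [offDiagPart_linearCombination, offDiagPart_linearCombination,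
          show ∀ a b c d : Matrix (Fin p) (Fin p) ℝ,
            (1 - t) • a + t • b - ((1 - t) • c + t • d) = (1 - t) • (a - c) + t • (b - d)
            from fun a b c d => by module]
        exact l1Norm_convexComb_le ht0 ht1 _ _
      · simp
  simp only [objFGL]
  linarith [hsum _ _ _ hloss, mul_le_mul_of_nonneg_left (hsum _ _ _ hpen) hlam,
    mul_le_mul_of_nonneg_left (hsum _ _ _ fun k => hsum _ _ _ (hfused k)) hrho]

section TwoGroups

variable {L lam rho lam0 : ℝ} {Θ₀ S : Fin 2 → Matrix (Fin p) (Fin p) ℝ}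

theorem objFGL_sub_ge (hL : 0 < L) (hΘ₀ : ∀ k, (Θ₀ k).PosDef)
    (heig : ∀ k i, 1 / L ≤ (hΘ₀ k).1.eigenvalues i ∧ (hΘ₀ k).1.eigenvalues i ≤ L)
    (hdiag : ∀ k i, S k i i = (Θ₀ k)⁻¹ i i)
    (hclose : ∀ k, supNorm (S k - (Θ₀ k)⁻¹) ≤ lam0)
    (hrho : 0 ≤ rho) (hlam : 0 ≤ lam) (hlam_low : lam0 + rho ≤ lam / 2)
    {Θ : Fin 2 → Matrix (Fin p) (Fin p) ℝ} (hΘ : ∀ k, (Θ k).PosDef)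
    (hF : ∀ k, frobSq (Θ k - Θ₀ k) ≤ (1 / L) ^ 2) :
    1 / (8 * L ^ 2) / 2 * ∑ k, frobSq (Θ k - Θ₀ k)
      + lam / 2 * ∑ k, l1Norm (offDiagPart (Θ k - Θ₀ k))
      - 2 * lam ^ 2 / (1 / (8 * L ^ 2)) * ((sparsity (Θ₀ 0) : ℝ) + sparsity (Θ₀ 1))
      ≤ objFGL S lam rho Θ - objFGL S lam rho Θ₀ := by
  have hc : (0 : ℝ) < 1 / (8 * L ^ 2) := by positivity
  have hloss := fun k => trace_sub_log_det_increment_ge (hΘ₀ k) (hΘ k) (by positivity) (heig k)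
    (hF k) (hdiag k)
  simp only [div_eq_mul_one_div (frobSq _)] at hloss
  have hpen := fun k => l1Norm_offDiagPart_increment_ge hc hlam (Θ₀ k) (Θ k)
  have hfused := l1Norm_sub_le_sub_add_add (offDiagPart (Θ 0)) (offDiagPart (Θ 1))
    (offDiagPart (Θ₀ 0)) (offDiagPart (Θ₀ 1))
  rw [← offDiagPart_sub (Θ 0) (Θ₀ 0), ← offDiagPart_sub (Θ 1) (Θ₀ 1)] at hfused
  have hexcess := fun k => mul_le_mul_of_nonneg_right ((hclose k).trans
    (show lam0 ≤ lam / 2 - rho by linarith)) (l1Norm_nonneg (offDiagPart (Θ k - Θ₀ k)))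
  rw [objFGL_fin_two, objFGL_fin_two, Fin.sum_univ_two, Fin.sum_univ_two]
  linarith [hloss 0, hloss 1, hpen 0, hpen 1, hexcess 0, hexcess 1,
    mul_le_mul_of_nonneg_left hfused hrho]

theorem sum_frobSq_le_of_objFGL_le (hL : 0 < L) (hΘ₀ : ∀ k, (Θ₀ k).PosDef)
    (heig : ∀ k i, 1 / L ≤ (hΘ₀ k).1.eigenvalues i ∧ (hΘ₀ k).1.eigenvalues i ≤ L)
    (hdiag : ∀ k i, S k i i = (Θ₀ k)⁻¹ i i)
    (hclose : ∀ k, supNorm (S k - (Θ₀ k)⁻¹) ≤ lam0)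
    (hrho : 0 ≤ rho) (hlam : 0 ≤ lam) (hlam_low : lam0 + rho ≤ lam / 2)
    (hgap : 2 * lam ^ 2 / (1 / (8 * L ^ 2)) * ((sparsity (Θ₀ 0) : ℝ) + sparsity (Θ₀ 1))
      < 1 / (8 * L ^ 2) / 2 * (1 / L) ^ 2)
    {Θ : Fin 2 → Matrix (Fin p) (Fin p) ℝ} (hΘ : ∀ k, (Θ k).PosDef)
    (hle : objFGL S lam rho Θ ≤ objFGL S lam rho Θ₀) :
    ∑ k, frobSq (Θ k - Θ₀ k) ≤ (1 / L) ^ 2 := by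
  -- otherwise the point of the segment from `Θ₀` to `Θ` at distance exactly `1 / L` would
  -- have objective both `≤ F(Θ₀)` (convexity) and `> F(Θ₀)` (local lower bound)
  set D := ∑ k, frobSq (Θ k - Θ₀ k)
  by_contra! hD
  have hDpos : 0 < D := lt_trans (by positivity) hD
  set t := 1 / L / Real.sqrt D
  have ht0 : 0 < t := by positivity
  have ht1 : t < 1 := by
    rw [div_lt_one (Real.sqrt_pos.mpr hDpos),
      ← Real.sqrt_sq (by positivity : (0 : ℝ) ≤ 1 / L)]
    exact Real.sqrt_lt_sqrt (by positivity) hD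
  set Θt : Fin 2 → Matrix (Fin p) (Fin p) ℝ := fun k => (1 - t) • Θ₀ k + t • Θ k
  have hfrob : ∀ k, frobSq (Θt k - Θ₀ k) = t ^ 2 * frobSq (Θ k - Θ₀ k) := fun k => by
    rw [← frobSq_smul]; congr 1; simp only [Θt]; module
  have hsum : ∑ k, frobSq (Θt k - Θ₀ k) = (1 / L) ^ 2 := by
    rw [Finset.sum_congr rfl fun k _ => hfrob k, ← Finset.mul_sum, div_pow,
      Real.sq_sqrt hDpos.le, div_mul_cancel₀ _ hDpos.ne']
  have hF : ∀ k, frobSq (Θt k - Θ₀ k) ≤ (1 / L) ^ 2 := fun k =>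
    hsum ▸ Finset.single_le_sum (fun j _ => frobSq_nonneg (Θt j - Θ₀ j)) (Finset.mem_univ k)
  have hlow := objFGL_sub_ge hL hΘ₀ heig hdiag hclose hrho hlam hlam_low
    (fun k => (hΘ₀ k).convexComb (hΘ k) ht0.le ht1.le) hF
  have hup := objFGL_convexComb_le S hlam hrho hΘ₀ hΘ ht0.le ht1.le
  rw [hsum] at hlow
  have hl1 : 0 ≤ lam / 2 * ∑ k, l1Norm (offDiagPart (Θt k - Θ₀ k)) :=
    mul_nonneg (by linarith) (Finset.sum_nonneg fun k _ => l1Norm_nonneg _)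
  linarith [mul_le_mul_of_nonneg_left hle ht0.le]

end TwoGroups

lemma two_mul_sq_div_mul_lt_of_tuning {L lam lam0 s : ℝ} (hL : 0 < L) (hlam0 : lam0 ≤ lam / 2)
    (hlam : lam ≤ 1 / (8 * L ^ 2) / (8 * L))
    (hs : 8 * lam ^ 2 * s / (1 / (8 * L ^ 2)) ≤ lam0 / (2 * L)) :
    2 * lam ^ 2 / (1 / (8 * L ^ 2)) * s < 1 / (8 * L ^ 2) / 2 * (1 / L) ^ 2 := by
  have hq : 8 * lam ^ 2 * s / (1 / (8 * L ^ 2)) ≤ 1 / (256 * L ^ 4) := calc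
    _ ≤ lam0 / (2 * L) := hs
    _ ≤ lam / 2 / (2 * L) := by gcongr
    _ ≤ 1 / (8 * L ^ 2) / (8 * L) / 2 / (2 * L) := by gcongr
    _ = 1 / (256 * L ^ 4) := by field_simp; ring
  have hpos : 0 < 1 / (256 * L ^ 4) := by positivity
  calc 2 * lam ^ 2 / (1 / (8 * L ^ 2)) * s = 8 * lam ^ 2 * s / (1 / (8 * L ^ 2)) / 4 := by ring
    _ < 16 * (1 / (256 * L ^ 4)) := by linarith
    _ = 1 / (8 * L ^ 2) / 2 * (1 / L) ^ 2 := by field_simp; ring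

end

theorem oracle_inequality_FGL_two_correlation_general
    (p : ℕ) (L lam rho lam0 : ℝ) (hL : 1 ≤ L)
    (ΘR0 Rhat ΘhatR : Fin 2 → Matrix (Fin p) (Fin p) ℝ)
    (hΘR0 : ∀ k, (ΘR0 k).PosDef)
    (heig : ∀ k i, 1 / L ≤ (hΘR0 k).1.eigenvalues i ∧ (hΘR0 k).1.eigenvalues i ≤ L)
    (hRdiag : ∀ k i, Rhat k i i = 1)
    (hR0diag : ∀ k i, (ΘR0 k)⁻¹ i i = 1)
    (hclose : ∀ k, supNorm (Rhat k - (ΘR0 k)⁻¹) ≤ lam0)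
    (hrho : 0 ≤ rho)
    (hlam_low : 2 * (rho + lam0) ≤ lam)
    (hlam_high : lam ≤ (1 / (8 * L ^ 2)) / (8 * L))
    (hsparse : 8 * lam ^ 2 * ((sparsity (ΘR0 0) : ℝ) + (sparsity (ΘR0 1) : ℝ)) / (1 / (8 * L ^ 2))
        + 4 * (p : ℝ) * lam0 ^ 2 / (1 / (8 * L ^ 2)) ≤ lam0 / (2 * L))
    (hΘhatR : ∀ k, (ΘhatR k).PosDef)
    (hmin : ∀ Θ : Fin 2 → Matrix (Fin p) (Fin p) ℝ, (∀ k, (Θ k).PosDef) →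
        objFGL Rhat lam rho ΘhatR ≤ objFGL Rhat lam rho Θ) :
    (1 / (8 * L ^ 2)) * ∑ k, frobSq (ΘhatR k - ΘR0 k)
      + lam * ∑ k, l1Norm (offDiagPart (ΘhatR k - ΘR0 k))
      ≤ 8 * lam ^ 2 * ((sparsity (ΘR0 0) : ℝ) + (sparsity (ΘR0 1) : ℝ)) / (1 / (8 * L ^ 2)) := by
  have hL0 : 0 < L := by linarith
  have hlam0 : 0 ≤ lam0 := (supNorm_nonneg _).trans (hclose 0)
  have hlam_half : lam0 + rho ≤ lam / 2 := by linarith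
  have hlam : 0 ≤ lam := by linarith
  have hdiag : ∀ k i, Rhat k i i = (ΘR0 k)⁻¹ i i := fun k i =>
    (hRdiag k i).trans (hR0diag k i).symm
  have hgap := two_mul_sq_div_mul_lt_of_tuning hL0 (by linarith) hlam_high
    (le_of_add_le_of_nonneg_left hsparse (by positivity))
  have hle := hmin ΘR0 hΘR0
  have hF := sum_frobSq_le_of_objFGL_le hL0 hΘR0 heig hdiag hclose hrho hlam hlam_half hgap
    hΘhatR hle
  have hlow := objFGL_sub_ge hL0 hΘR0 heig hdiag hclose hrho hlam hlam_half hΘhatR fun k =>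
    (Finset.single_le_sum (fun j _ => frobSq_nonneg (ΘhatR j - ΘR0 j)) (Finset.mem_univ k)).trans
      hF
  have hs :
      0 ≤ 2 * lam ^ 2 / (1 / (8 * L ^ 2)) * ((sparsity (ΘR0 0) : ℝ) + sparsity (ΘR0 1)) := by
    positivity
  linarith

/-- Oracle inequality (Frobenius/ℓ₁ part) for the two-group fused graphical
lasso estimator based on correlation-type matrices with unit diagonals; here
`c = 1/(8L²)` and `R₀⁽ᵏ⁾ = (Θ_{R0}⁽ᵏ⁾)⁻¹`. -/
theorem oracle_inequality_FGL_two_correlation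
    (p : ℕ) (L lam rho lam0 : ℝ) (hL : 1 ≤ L)
    (ΘR0 Rhat ΘhatR : Fin 2 → Matrix (Fin p) (Fin p) ℝ)
    (hΘR0 : ∀ k, (ΘR0 k).PosDef)
    (heig : ∀ k i, 1 / L ≤ (hΘR0 k).1.eigenvalues i ∧ (hΘR0 k).1.eigenvalues i ≤ L)
    (hRsymm : ∀ k, (Rhat k).IsSymm)
    (hRdiag : ∀ k i, Rhat k i i = 1)
    (hR0diag : ∀ k i, (ΘR0 k)⁻¹ i i = 1)
    (hlam0 : 0 < lam0)
    (hclose : ∀ k, supNorm (Rhat k - (ΘR0 k)⁻¹) ≤ lam0)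
    (hrho : 0 ≤ rho)
    (hlam_low : 2 * (rho + lam0) ≤ lam)
    (hlam_high : lam ≤ (1 / (8 * L ^ 2)) / (8 * L))
    (hsparse : 8 * lam ^ 2 * ((sparsity (ΘR0 0) : ℝ) + (sparsity (ΘR0 1) : ℝ)) / (1 / (8 * L ^ 2))
        + 4 * (p : ℝ) * lam0 ^ 2 / (1 / (8 * L ^ 2)) ≤ lam0 / (2 * L))
    (hΘhatR : ∀ k, (ΘhatR k).PosDef)
    (hmin : ∀ Θ : Fin 2 → Matrix (Fin p) (Fin p) ℝ, (∀ k, (Θ k).PosDef) →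
        objFGL Rhat lam rho ΘhatR ≤ objFGL Rhat lam rho Θ) :
    (1 / (8 * L ^ 2)) * ∑ k, frobSq (ΘhatR k - ΘR0 k)
      + lam * ∑ k, l1Norm (offDiagPart (ΘhatR k - ΘR0 k))
      ≤ 8 * lam ^ 2 * ((sparsity (ΘR0 0) : ℝ) + (sparsity (ΘR0 1) : ℝ)) / (1 / (8 * L ^ 2)) :=
  oracle_inequality_FGL_two_correlation_general p L lam rho lam0 hL ΘR0 Rhat ΘhatR hΘR0 heig hRdiag
    hR0diag hclose hrho hlam_low hlam_high hsparse hΘhatR hmin
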